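/- arXiv:2109.00190 — 3 statements merged into one kernel-verified Lean document; each statement's English description precedes it below -/
import Mathlib

section
/- Let K : {-2,…,2}² → ℝ be a 5×5 convolutional kernel and d > 2. With periodic padding, there exist 3×3 kernels P_{i,j} and the shift kernels S_{i,j} (supported at (i,j)) for i,j ∈ {-1,0,1} such that for all X ∈ ℝ^{d×d}, K ∗ X = Σ_{i,j∈{-1,0,1}} P_{i,j} ∗ (S_{i,j} ∗ X). -/
/-- Periodic 2D convolution on `(ℤ/dℤ)²`-indexed data with a kernel of radius `k`:
`(K ∗ X)_{m,n} = Σ_{s,t=-k}^{k} K_{s,t} X_{m+s, n+t}`, indices mod `d`. -/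
noncomputable def pconv {d : ℕ} (k : ℤ) (K : ℤ → ℤ → ℝ) (X : ZMod d → ZMod d → ℝ) :
    ZMod d → ZMod d → ℝ :=
  fun m n => ∑ s ∈ Finset.Icc (-k) k, ∑ t ∈ Finset.Icc (-k) k,
    K s t * X (m + (s : ZMod d)) (n + (t : ZMod d))

/-- The 3×3 shift kernel supported at `(i,j)` with value 1. -/
noncomputable def shiftKer (i j : ℤ) : ℤ → ℤ → ℝ :=
  fun s t => if s = i ∧ t = j then 1 else 0

/-- Clamp an integer to `[-1, 1]`. -/
def clampZ (u : ℤ) : ℤ := max (-1) (min 1 u)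

/-- The 3×3 kernels in the decomposition: `P i j` picks up the entries `K (i+s) (j+t)`
for which the canonical decomposition of the offset is `(i, j)` plus `(s, t)`. -/
noncomputable def Pker (K : ℤ → ℤ → ℝ) (i j s t : ℤ) : ℝ :=
  if |s| ≤ 1 ∧ |t| ≤ 1 ∧ i = clampZ (i + s) ∧ j = clampZ (j + t) then K (i + s) (j + t) else 0

lemma shift_eval {d : ℕ} (i j : ℤ) (hi : -1 ≤ i ∧ i ≤ 1) (hj : -1 ≤ j ∧ j ≤ 1)
    (X : ZMod d → ZMod d → ℝ) (m n : ZMod d) :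
    pconv 1 (shiftKer i j) X m n = X (m + (i : ZMod d)) (n + (j : ZMod d)) := by
  simp only [pconv, shiftKer, ite_and, ite_mul, one_mul, zero_mul]
  rw [Finset.sum_eq_single i]
  · rw [Finset.sum_eq_single j]
    · simp
    · intro b _ hb; simp [hb]
    · intro h; exact absurd (Finset.mem_Icc.2 hj) h
  · intro b _ hb; simp [hb]
  · intro h; exact absurd (Finset.mem_Icc.2 hi) h

/-- Decomposition of a 5×5 kernel into 3×3 kernels composed with shift kernels
(periodic padding). -/
theorem decomp_5x5 {d : ℕ} (hd : 2 < d) (K : ℤ → ℤ → ℝ) :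
    ∃ P : ℤ → ℤ → ℤ → ℤ → ℝ,
      (∀ i j s t : ℤ, ((1 : ℤ) < |s| ∨ (1 : ℤ) < |t|) → P i j s t = 0) ∧
      ∀ (X : ZMod d → ZMod d → ℝ) (m n : ZMod d),
        pconv 2 K X m n =
          ∑ i ∈ Finset.Icc (-1 : ℤ) 1, ∑ j ∈ Finset.Icc (-1 : ℤ) 1,
            pconv 1 (P i j) (pconv 1 (shiftKer i j) X) m n := by
  refine ⟨Pker K, ?_, ?_⟩
  · intro i j s t h
    unfold Pker
    rcases h with h | h <;> rw [if_neg] <;> intro hc <;> omega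
  · intro X m n
    have hIcc1 : Finset.Icc (-1 : ℤ) 1 = {-1, 0, 1} := by decide
    have hIcc2 : Finset.Icc (-2 : ℤ) 2 = {-2, -1, 0, 1, 2} := by decide
    have hs : ∀ (i j : ℤ), (-1 ≤ i ∧ i ≤ 1) → (-1 ≤ j ∧ j ≤ 1) → ∀ m n,
        pconv 1 (shiftKer i j) X m n = X (m + (i : ZMod d)) (n + (j : ZMod d)) :=
      fun i j hi hj m n => shift_eval i j hi hj X m n
    simp only [pconv, shiftKer, Pker, clampZ, hIcc1, hIcc2]
    norm_num [Finset.sum_insert, Finset.mem_insert, Finset.mem_singleton]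
    ring_nf
end

section
/- Let k ≥ 1, K : {-k,…,k}² → ℝ a (2k+1)×(2k+1) kernel, and d > k. With periodic padding, there exist 3×3 kernels P_{(i₁,j₁),…,(i_{k-1},j_{k-1})} and shift kernels S_{i,j} (i,j ∈ {-1,0,1}) such that for all X ∈ ℝ^{d×d}, K ∗ X = Σ over all (i₁,j₁),…,(i_{k-1},j_{k-1}) ∈ {-1,0,1}² of P_{(i₁,j₁),…,(i_{k-1},j_{k-1})} ∗ S_{i_{k-1},j_{k-1}} ∗ ⋯ ∗ S_{i₁,j₁} ∗ X. -/
/-- Apply a list of shift-kernel convolutions successively, first list element applied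
first (innermost). -/
noncomputable def applyShifts {d : ℕ} (l : List (ℤ × ℤ)) (X : ZMod d → ZMod d → ℝ) :
    ZMod d → ZMod d → ℝ :=
  l.foldl (fun Y ij => pconv 1 (shiftKer ij.1 ij.2) Y) X

open Finset

def clampIcc (k a : ℤ) : ℤ := max (-k) (min k a)

theorem sum_sum_ite_clampIcc_add {M : Type*} [AddCommMonoid M] (k : ℕ) (f : ℤ → M) :
    ∑ i ∈ Icc (-1 : ℤ) 1, ∑ s ∈ Icc (-(k : ℤ)) k,
        (if clampIcc k (i + s) = s then f (i + s) else 0) =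
      ∑ a ∈ Icc (-((k : ℤ) + 1)) (k + 1), f a := by
  rw [← sum_product', ← sum_filter]
  apply sum_nbij' (fun p => p.1 + p.2) (fun a => (a - clampIcc k a, clampIcc k a))
  · rintro ⟨i, s⟩ h
    simp only [mem_filter, mem_product, mem_Icc] at h ⊢
    simp only [clampIcc] at h
    omega
  · intro a h
    simp only [mem_filter, mem_product, mem_Icc] at h ⊢
    simp only [clampIcc]
    omega
  · rintro ⟨i, s⟩ h
    simp [(mem_filter.1 h).2]
  · simp
  · simp

theorem Fin.sum_piFinset_eq_sum_sum_cons {M : Type*} [AddCommMonoid M] {n : ℕ}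
    {α : Fin (n + 1) → Type*} (S : ∀ i, Finset (α i)) (f : (∀ i, α i) → M) :
    ∑ e ∈ Fintype.piFinset S, f e =
      ∑ q ∈ S 0, ∑ c ∈ Fintype.piFinset (Fin.tail S), f (Fin.cons q c) := by
  have h := filter_piFinset_eq_map_consEquiv S (fun _ => True)
  simp only [filter_true_of_mem (fun _ _ => trivial)] at h
  rw [h, sum_map, sum_product]
  rfl

/-- `K_{ij}` keeps `K (i + s) (j + t)` only when `(s, t)` is the canonical remainder of that offset,
so that every offset of `K` is counted exactly once. -/
noncomputable def peelKernel (k : ℕ) (K : ℤ → ℤ → ℝ) (i j : ℤ) : ℤ → ℤ → ℝ :=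
  fun s t => if clampIcc k (i + s) = s ∧ clampIcc k (j + t) = t then K (i + s) (j + t) else 0

theorem pconv_add_one_eq_sum_peelKernel {d : ℕ} (k : ℕ) (K : ℤ → ℤ → ℝ)
    (X : ZMod d → ZMod d → ℝ) (m n : ZMod d) :
    pconv ((k : ℤ) + 1) K X m n =
      ∑ i ∈ Icc (-1 : ℤ) 1, ∑ j ∈ Icc (-1 : ℤ) 1,
        pconv k (peelKernel k K i j)
          (fun m' n' => X (m' + (i : ZMod d)) (n' + (j : ZMod d))) m n := by
  set g : ℤ → ℤ → ℝ := fun a b => K a b * X (m + a) (n + b)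
  have hterm : ∀ i j s t : ℤ, peelKernel k K i j s t * X (m + s + i) (n + t + j) =
      if clampIcc k (i + s) = s then
        (if clampIcc k (j + t) = t then g (i + s) (j + t) else 0) else 0 := by
    intro i j s t
    simp only [peelKernel, ite_and, g]
    split_ifs <;> simp [add_comm, add_left_comm]
  calc pconv ((k : ℤ) + 1) K X m n
      = ∑ a ∈ Icc (-((k : ℤ) + 1)) (k + 1), ∑ b ∈ Icc (-((k : ℤ) + 1)) (k + 1), g a b := rfl
    _ = ∑ i ∈ Icc (-1 : ℤ) 1, ∑ s ∈ Icc (-(k : ℤ)) k, if clampIcc k (i + s) = s then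
          ∑ b ∈ Icc (-((k : ℤ) + 1)) (k + 1), g (i + s) b else 0 :=
        (sum_sum_ite_clampIcc_add k _).symm
    _ = ∑ i ∈ Icc (-1 : ℤ) 1, ∑ s ∈ Icc (-(k : ℤ)) k, if clampIcc k (i + s) = s then
          ∑ j ∈ Icc (-1 : ℤ) 1, ∑ t ∈ Icc (-(k : ℤ)) k,
            (if clampIcc k (j + t) = t then g (i + s) (j + t) else 0) else 0 := by
        simp only [sum_sum_ite_clampIcc_add]
    _ = _ := by
        simp only [pconv, hterm]
        refine sum_congr rfl fun i _ => ?_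
        rw [sum_comm]
        refine sum_congr rfl fun s _ => ?_
        split_ifs <;> simp

theorem pconv_one_shiftKer {d : ℕ} {i j : ℤ} (hi : i ∈ Icc (-1 : ℤ) 1) (hj : j ∈ Icc (-1 : ℤ) 1)
    (X : ZMod d → ZMod d → ℝ) :
    pconv 1 (shiftKer i j) X = fun m n => X (m + (i : ZMod d)) (n + (j : ZMod d)) := by
  ext m n
  simp only [pconv, shiftKer, ite_and, ite_mul, one_mul, zero_mul, sum_ite_irrel,
    sum_ite_eq', hi, hj, if_true, sum_const_zero]

theorem applyShifts_ofFn_cons {d n : ℕ} (q : ℤ × ℤ) (c : Fin n → ℤ × ℤ)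
    (X : ZMod d → ZMod d → ℝ) :
    applyShifts (List.ofFn (Fin.cons q c : Fin (n + 1) → ℤ × ℤ)) X =
      applyShifts (List.ofFn c) (pconv 1 (shiftKer q.1 q.2) X) := by
  simp [applyShifts, List.ofFn_succ]

noncomputable def truncKernel (k : ℤ) (K : ℤ → ℤ → ℝ) : ℤ → ℤ → ℝ :=
  fun s t => if s ∈ Icc (-k) k ∧ t ∈ Icc (-k) k then K s t else 0

theorem pconv_truncKernel {d : ℕ} (k : ℤ) (K : ℤ → ℤ → ℝ) (X : ZMod d → ZMod d → ℝ) :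
    pconv k (truncKernel k K) X = pconv k K X := by
  ext m n
  refine sum_congr rfl fun s hs => sum_congr rfl fun t ht => ?_
  simp [truncKernel, hs, ht]

theorem exists_shiftKer_decomposition {d : ℕ} (k : ℕ) (K : ℤ → ℤ → ℝ) :
    ∃ P : (Fin k → ℤ × ℤ) → ℤ → ℤ → ℝ,
      (∀ c s t, ((1 : ℤ) < |s| ∨ (1 : ℤ) < |t|) → P c s t = 0) ∧
      ∀ (X : ZMod d → ZMod d → ℝ) (m n : ZMod d),
        pconv ((k : ℤ) + 1) K X m n =
          ∑ c ∈ Fintype.piFinset (fun _ : Fin k => Icc (-1 : ℤ) 1 ×ˢ Icc (-1 : ℤ) 1),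
            pconv 1 (P c) (applyShifts (List.ofFn c) X) m n := by
  induction k generalizing K with
  | zero =>
    refine ⟨fun _ => truncKernel 1 K, fun _ s t h => ?_, fun X m n => ?_⟩
    · simp only [truncKernel, mem_Icc, ← abs_le]
      rw [if_neg (by omega)]
    · simp [pconv_truncKernel, applyShifts]
  | succ k ih =>
    choose P hP_supp hP using fun q : ℤ × ℤ => ih (peelKernel (k + 1) K q.1 q.2)
    refine ⟨fun e => P (e 0) (Fin.tail e), fun e s t h => hP_supp _ _ _ _ h, fun X m n => ?_⟩
    rw [Fin.sum_piFinset_eq_sum_sum_cons, sum_product, pconv_add_one_eq_sum_peelKernel]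
    refine sum_congr rfl fun i hi => sum_congr rfl fun j hj => ?_
    rw [← pconv_one_shiftKer hi hj, Nat.cast_succ, hP (i, j)]
    simp only [applyShifts_ofFn_cons, Fin.cons_zero, Fin.tail_cons]
    rfl

theorem decomp_recursive_general {d k : ℕ} (hk : 1 ≤ k) (K : ℤ → ℤ → ℝ) :
    ∃ P : (Fin (k - 1) → ℤ × ℤ) → ℤ → ℤ → ℝ,
      (∀ c s t, ((1 : ℤ) < |s| ∨ (1 : ℤ) < |t|) → P c s t = 0) ∧
      ∀ (X : ZMod d → ZMod d → ℝ) (m n : ZMod d),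
        pconv (k : ℤ) K X m n =
          ∑ c ∈ Fintype.piFinset
              (fun _ : Fin (k - 1) => (Finset.Icc (-1 : ℤ) 1) ×ˢ (Finset.Icc (-1 : ℤ) 1)),
            pconv 1 (P c) (applyShifts (List.ofFn c) X) m n := by
  obtain ⟨k, rfl⟩ := Nat.exists_eq_add_of_le' hk
  simpa using exists_shiftKer_decomposition (d := d) k K

/-- Recursive decomposition of a (2k+1)×(2k+1) kernel into compositions of 3×3 kernels
applied k-1 times (periodic padding). -/
theorem decomp_recursive {d k : ℕ} (hk : 1 ≤ k) (hd : k < d) (K : ℤ → ℤ → ℝ) :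
    ∃ P : (Fin (k - 1) → ℤ × ℤ) → ℤ → ℤ → ℝ,
      (∀ c s t, ((1 : ℤ) < |s| ∨ (1 : ℤ) < |t|) → P c s t = 0) ∧
      ∀ (X : ZMod d → ZMod d → ℝ) (m n : ZMod d),
        pconv (k : ℤ) K X m n =
          ∑ c ∈ Fintype.piFinset
              (fun _ : Fin (k - 1) => (Finset.Icc (-1 : ℤ) 1) ×ˢ (Finset.Icc (-1 : ℤ) 1)),
            pconv 1 (P c) (applyShifts (List.ofFn c) X) m n :=
  decomp_recursive_general hk K
end

section
/- In a ResNet block with ReLU activation, if f^{ℓ}(x) = σ(R ∗ f^{ℓ-1}(x) + B ∗ σ(A ∗ f^{ℓ-1}(x) + a𝟙) + b𝟙), and A = (K₁; I; 0) stacked, B = (K₂, -R, 0), a is chosen so that A ∗ f^{ℓ-1}(x) + a𝟙 ≥ 0 entrywise on Ω, and b is chosen so that the outer pre-activation is entrywise nonnegative on Ω, then f^{ℓ}(x) = K₂ ∗ K₁ ∗ f^{ℓ-1}(x) + B ∗ (a𝟙) + b𝟙 for all x ∈ Ω. -/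
/-- Single-channel periodic 3×3 convolution on `(ℤ/dℤ)²`-indexed data. -/
noncomputable def conv3 {d : ℕ} (K : ℤ → ℤ → ℝ) (X : ZMod d → ZMod d → ℝ) :
    ZMod d → ZMod d → ℝ :=
  fun m n => ∑ s ∈ Finset.Icc (-1 : ℤ) 1, ∑ t ∈ Finset.Icc (-1 : ℤ) 1,
    K s t * X (m + (s : ZMod d)) (n + (t : ZMod d))

/-- Multi-channel periodic convolution with 3×3 kernels: input channels `ι`, output
channels `ο`. -/
noncomputable def mconv {d : ℕ} {ι ο : Type*} [Fintype ι]
    (K : ι → ο → ℤ → ℤ → ℝ) (F : ι → ZMod d → ZMod d → ℝ) :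
    ο → ZMod d → ZMod d → ℝ :=
  fun q m n => ∑ p, conv3 (K p q) (F p) m n

/-- The identity (Dirac) 3×3 kernel. -/
noncomputable def idKer : ℤ → ℤ → ℝ := fun s t => if s = 0 ∧ t = 0 then 1 else 0

/-- ReLU activation function. -/
noncomputable def ReLU (t : ℝ) : ℝ := max 0 t

lemma Icc_eq : Finset.Icc (-1 : ℤ) 1 = {-1, 0, 1} := by decide

lemma conv3_add {d : ℕ} (K : ℤ → ℤ → ℝ) (X Y : ZMod d → ZMod d → ℝ) (m n : ZMod d) :
    conv3 K (fun m' n' => X m' n' + Y m' n') m n = conv3 K X m n + conv3 K Y m n := by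
  simp [conv3, mul_add, Finset.sum_add_distrib]

lemma conv3_zero {d : ℕ} (X : ZMod d → ZMod d → ℝ) (m n : ZMod d) :
    conv3 (0 : ℤ → ℤ → ℝ) X m n = 0 := by
  simp [conv3]

lemma conv3_dirac {d : ℕ} (c : ℝ) (X : ZMod d → ZMod d → ℝ) (m n : ZMod d) :
    conv3 (fun s t => if s = 0 ∧ t = 0 then c else 0) X m n = c * X m n := by
  simp [conv3, Icc_eq, Finset.sum_insert, Finset.mem_insert]

lemma conv3_idKer {d : ℕ} (X : ZMod d → ZMod d → ℝ) (m n : ZMod d) :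
    conv3 idKer X m n = X m n := by
  have := conv3_dirac (1 : ℝ) X m n
  simp only [one_mul] at this
  exact this

/-- A ResNet block `σ(R ∗ f + B ∗ σ(A ∗ f + a𝟙) + b𝟙)` with
`A = (K₁; I; 0)` stacked and `B = (K₂, -R, 0)`, where the biases `a` and `b` make both
pre-activations entrywise nonnegative on `Ω`, computes
`K₂ ∗ K₁ ∗ f + B ∗ (a𝟙) + b𝟙`: the residual term cancels exactly. -/
theorem resnet_block_identity {d cin κ π cout : ℕ} {α : Type*} (Ω : Set α)
    (g : α → Fin cin → ZMod d → ZMod d → ℝ)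
    (K₁ : Fin cin → Fin κ → ℤ → ℤ → ℝ) (K₂ : Fin κ → Fin cout → ℤ → ℤ → ℝ)
    (R : Fin cin → Fin cout → ℝ)
    (A : Fin cin → (Fin κ ⊕ Fin cin ⊕ Fin π) → ℤ → ℤ → ℝ)
    (B : (Fin κ ⊕ Fin cin ⊕ Fin π) → Fin cout → ℤ → ℤ → ℝ)
    (hA : ∀ p c, A p c = match c with
      | .inl j => K₁ p j
      | .inr (.inl j) => if p = j then idKer else 0
      | .inr (.inr _) => 0)
    (hB : ∀ c q, B c q = match c with
      | .inl j => K₂ j q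
      | .inr (.inl j) => fun s t => if s = 0 ∧ t = 0 then -(R j q) else 0
      | .inr (.inr _) => 0)
    (a : (Fin κ ⊕ Fin cin ⊕ Fin π) → ℝ) (b : Fin cout → ℝ)
    (ha : ∀ x ∈ Ω, ∀ c (m n : ZMod d), 0 ≤ mconv A (g x) c m n + a c)
    (hb : ∀ x ∈ Ω, ∀ (q : Fin cout) (m n : ZMod d),
      0 ≤ (∑ p, R p q * g x p m n) +
          mconv B (fun c m' n' => ReLU (mconv A (g x) c m' n' + a c)) q m n + b q) :
    ∀ x ∈ Ω, ∀ (q : Fin cout) (m n : ZMod d),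
      ReLU ((∑ p, R p q * g x p m n) +
          mconv B (fun c m' n' => ReLU (mconv A (g x) c m' n' + a c)) q m n + b q) =
        mconv K₂ (mconv K₁ (g x)) q m n +
          mconv B (fun c _ _ => a c) q m n + b q := by
  intro x hx q m n
  rw [ReLU, max_eq_right (hb x hx q m n)]
  have hAeval : ∀ c (m' n' : ZMod d), mconv A (g x) c m' n' =
      (match c with
       | .inl j => mconv K₁ (g x) j m' n'
       | .inr (.inl j) => g x j m' n'
       | .inr (.inr _) => 0) := by
    intro c m' n'
    cases c with
    | inl j => simp [mconv, hA]
    | inr c =>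
      cases c with
      | inl j =>
        simp only [mconv, hA]
        rw [Finset.sum_eq_single j]
        · simp [conv3_idKer]
        · intro p _ hp
          simp [hp, conv3_zero]
        · simp
      | inr j => simp [mconv, hA, conv3_zero]
  have hinner : ∀ c (m' n' : ZMod d), ReLU (mconv A (g x) c m' n' + a c) =
      mconv A (g x) c m' n' + a c := fun c m' n' =>
    max_eq_right (ha x hx c m' n')
  have hBeval : ∀ F : (Fin κ ⊕ Fin cin ⊕ Fin π) → ZMod d → ZMod d → ℝ,
      mconv B F q m n = (∑ j, conv3 (K₂ j q) (F (.inl j)) m n)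
        + ∑ j, -(R j q) * F (.inr (.inl j)) m n := by
    intro F
    simp only [mconv, Fintype.sum_sum_type, hB]
    simp [conv3_dirac, conv3_zero]
  simp only [hinner]
  rw [hBeval, hBeval]
  simp only [hAeval]
  simp only [conv3_add, Finset.sum_add_distrib, mul_add, neg_mul,
    Finset.sum_neg_distrib]
  have hK : mconv K₂ (mconv K₁ (g x)) q m n =
      ∑ j, conv3 (K₂ j q) (fun m' n' => mconv K₁ (g x) j m' n') m n := rfl
  rw [hK]
  ring
end
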